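/- A connected graph G is a partial cube if and only if G is bipartite and for every edge ab and every pair of edges xy, uv ∈ F_ab (with x, u ∈ W_ab and y, v ∈ W_ba), one has d(x,u) = d(y,v) and d(x,v) = d(y,u). -/

import Mathlib

/-!
In a hypercube an edge `ab` flips one coordinate `p`, and `F_ab` consists exactly of the edges
flipping `p`; this gives both the parity colouring and the rectangle identities.

Conversely, in a connected bipartite graph no vertex is equidistant from the ends of an edge, so
`W_ab` and `W_ba` are complementary. The rectangle condition then forces `W_xy = W_ab` for every
`xy ∈ F_ab`, by induction on the distance to `a`. Hence one step along a geodesic enters exactly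
one new semicube, and labelling each vertex by the semicubes that contain it but not a fixed base
vertex `v₀` is an isometric embedding into the hypercube on the set of semicubes.
-/

open scoped symmDiff

/-- The semicube `W_ab` of a graph: the set of vertices closer to `a` than to `b`. -/
def semicube {V : Type} (G : SimpleGraph V) (a b : V) : Set V :=
  {w | G.dist w a < G.dist w b}

/-- A set of vertices is convex if it contains every vertex lying on a shortest
path between two of its members. -/
def GraphConvex {V : Type} (G : SimpleGraph V) (S : Set V) : Prop :=
  ∀ u ∈ S, ∀ v ∈ S, ∀ w : V, G.dist u w + G.dist w v = G.dist u v → w ∈ S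

/-- A partial cube is a connected graph which embeds isometrically into a
hypercube `H(X)` (vertices: the finite subsets of `X`; distance: the Hamming
distance, i.e. the cardinality of the symmetric difference). -/
def IsPartialCube {V : Type} (G : SimpleGraph V) : Prop :=
  G.Connected ∧ ∃ (X : Type) (f : V → Set X),
    (∀ u, (f u).Finite) ∧ ∀ u v : V, (f u ∆ f v).ncard = G.dist u v

open SimpleGraph

namespace Set

variable {X : Type*} {S : Set X} {p : X}

theorem symmDiff_singleton_of_mem (hp : p ∈ S) : S ∆ {p} = S \ {p} := by
  ext x
  by_cases hx : x = p <;> simp [mem_symmDiff, hx, hp]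

theorem symmDiff_singleton_of_notMem (hp : p ∉ S) : S ∆ {p} = insert p S := by
  ext x
  by_cases hx : x = p <;> simp [mem_symmDiff, hx, hp]

theorem ncard_symmDiff_singleton_add_one (hS : S.Finite) (hp : p ∈ S) :
    (S ∆ {p}).ncard + 1 = S.ncard := by
  rw [symmDiff_singleton_of_mem hp, ncard_sdiff_singleton_add_one hp hS]

theorem ncard_symmDiff_singleton_of_notMem (hS : S.Finite) (hp : p ∉ S) :
    (S ∆ {p}).ncard = S.ncard + 1 := by
  rw [symmDiff_singleton_of_notMem hp, ncard_insert_of_notMem hp hS]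

theorem ncard_lt_ncard_symmDiff_singleton_iff (hS : S.Finite) :
    S.ncard < (S ∆ {p}).ncard ↔ p ∉ S := by
  by_cases hp : p ∈ S
  · have := ncard_symmDiff_singleton_add_one hS hp
    simp only [hp, not_true_eq_false, iff_false]
    omega
  · simp [ncard_symmDiff_singleton_of_notMem hS hp, hp]

end Set

theorem symmDiff_eq_symmDiff_of_symmDiff_eq {α : Type*} [GeneralizedBooleanAlgebra α]
    {a b c d : α} (h : a ∆ b = c ∆ d) : a ∆ c = b ∆ d := by
  rw [← symmDiff_eq_bot, ← symmDiff_symmDiff_symmDiff_comm, h, symmDiff_self]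

def RectangleCondition {V : Type} (G : SimpleGraph V) : Prop :=
  ∀ a b x y u v : V, G.Adj a b → G.Adj x y → G.Adj u v →
    x ∈ semicube G a b → y ∈ semicube G b a →
    u ∈ semicube G a b → v ∈ semicube G b a →
    G.dist x u = G.dist y v ∧ G.dist x v = G.dist y u

section IsometricEmbedding

variable {V : Type} {X : Type*} {G : SimpleGraph V} {f : V → Set X}

theorem exists_symmDiff_eq_singleton_of_adj
    (hf : ∀ u v, (f u ∆ f v).ncard = G.dist u v) {u v : V} (huv : G.Adj u v) :
    ∃ p, f u ∆ f v = {p} :=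
  Set.ncard_eq_one.mp (by rw [hf, dist_eq_one_iff_adj.mpr huv])

theorem mem_semicube_iff_of_symmDiff_eq_singleton (hfin : ∀ u, (f u).Finite)
    (hf : ∀ u v, (f u ∆ f v).ncard = G.dist u v) {a b : V} {p : X} (hp : f a ∆ f b = {p})
    (w : V) : w ∈ semicube G a b ↔ p ∉ f w ∆ f a := by
  have hb : f b = f a ∆ {p} := by rw [← hp, symmDiff_symmDiff_cancel_left]
  change G.dist w a < G.dist w b ↔ _
  rw [← hf, ← hf, hb, ← symmDiff_assoc]
  exact Set.ncard_lt_ncard_symmDiff_singleton_iff ((hfin w).symmDiff (hfin a))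

theorem symmDiff_eq_singleton_of_mem_semicube (hfin : ∀ u, (f u).Finite)
    (hf : ∀ u v, (f u ∆ f v).ncard = G.dist u v) {a b x y : V} {p : X}
    (hp : f a ∆ f b = {p}) (hxy : G.Adj x y) (hx : x ∈ semicube G a b)
    (hy : y ∈ semicube G b a) : f x ∆ f y = {p} := by
  obtain ⟨q, hq⟩ := exists_symmDiff_eq_singleton_of_adj hf hxy
  have hpx := (mem_semicube_iff_of_symmDiff_eq_singleton hfin hf hp x).mp hx
  have hpy := (mem_semicube_iff_of_symmDiff_eq_singleton hfin hf
    (by rw [symmDiff_comm, hp]) y).mp hy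
  have hpab : p ∈ f a ∆ f b := hp ▸ rfl
  have hpxy : p ∈ f x ∆ f y := by
    simp only [Set.mem_symmDiff] at hpx hpy hpab ⊢
    tauto
  rw [hq, Set.mem_singleton_iff] at hpxy
  rw [hq, hpxy]

end IsometricEmbedding

namespace IsPartialCube

variable {V : Type} {G : SimpleGraph V}

theorem colorable_two (h : IsPartialCube G) : G.Colorable 2 := by
  obtain ⟨-, X, f, hfin, hf⟩ := h
  refine (Coloring.mk (fun w => decide (Even (f w).ncard)) ?_).colorable
  intro u v huv
  obtain ⟨p, hp⟩ := exists_symmDiff_eq_singleton_of_adj hf huv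
  have hv : f v = f u ∆ {p} := by rw [← hp, symmDiff_symmDiff_cancel_left]
  have hcard : (f v).ncard + 1 = (f u).ncard ∨ (f u).ncard + 1 = (f v).ncard := by
    by_cases hpu : p ∈ f u
    · exact .inl (hv ▸ Set.ncard_symmDiff_singleton_add_one (hfin u) hpu)
    · exact .inr (hv ▸ Set.ncard_symmDiff_singleton_of_notMem (hfin u) hpu).symm
  rcases hcard with h | h <;> rw [← h] <;>
    simp only [ne_eq, decide_eq_decide, Nat.even_add_one] <;> tauto

theorem rectangleCondition (h : IsPartialCube G) : RectangleCondition G := by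
  obtain ⟨-, X, f, hfin, hf⟩ := h
  intro a b x y u v hab hxy huv hx hy hu hv
  obtain ⟨p, hp⟩ := exists_symmDiff_eq_singleton_of_adj hf hab
  have hcross : f x ∆ f y = f u ∆ f v := by
    rw [symmDiff_eq_singleton_of_mem_semicube hfin hf hp hxy hx hy,
      symmDiff_eq_singleton_of_mem_semicube hfin hf hp huv hu hv]
  rw [← hf, ← hf, ← hf, ← hf, symmDiff_eq_symmDiff_of_symmDiff_eq hcross,
    symmDiff_eq_symmDiff_of_symmDiff_eq (hcross.trans (symmDiff_comm _ _))]
  exact ⟨rfl, rfl⟩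

end IsPartialCube

section Semicube

variable {V : Type} {G : SimpleGraph V}

theorem mem_semicube_self {a b : V} (hab : G.Adj a b) : a ∈ semicube G a b := by
  simp [semicube, dist_eq_one_iff_adj.mpr hab]

theorem dist_eq_dist_add_one_of_mem_semicube {a b w : V} (hab : G.Adj a b)
    (hw : w ∈ semicube G a b) : G.dist w b = G.dist w a + 1 := by
  have hw : G.dist w a < G.dist w b := hw
  have := hab.diff_dist_adj (u := w)
  omega

theorem SimpleGraph.Connected.exists_adj_dist_eq (hconn : G.Connected) {u v : V} {n : ℕ}
    (h : G.dist u v = n + 1) : ∃ u', G.Adj u u' ∧ G.dist u' v = n := by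
  obtain ⟨p, hp⟩ := hconn.exists_walk_length_eq_dist u v
  cases p with
  | nil => simp at h
  | @cons _ u' _ huu' q =>
    refine ⟨u', huu', ?_⟩
    have hle : G.dist u' v ≤ q.length := dist_le q
    have hge := huu'.diff_dist_adj (u := v)
    rw [Walk.length_cons] at hp
    rw [dist_comm (u := v), dist_comm (u := v), h] at hge
    omega

theorem dist_ne_dist_of_adj (hconn : G.Connected) (hcol : G.Colorable 2) {a b : V}
    (hab : G.Adj a b) (w : V) : G.dist w a ≠ G.dist w b := by
  obtain ⟨p, hp⟩ := hconn.exists_walk_length_eq_dist w a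
  obtain ⟨q, hq⟩ := hconn.exists_walk_length_eq_dist w b
  have heven := two_colorable_iff_forall_loop_even.mp hcol w
    ((p.concat hab).append q.reverse)
  rw [Walk.length_append, Walk.length_concat,
    Walk.length_reverse, hp, hq] at heven
  intro h
  rw [h] at heven
  exact Nat.not_even_iff_odd.mpr (by rw [add_right_comm, ← two_mul]; exact odd_two_mul_add_one _)
    heven

theorem semicube_swap_eq_compl (hconn : G.Connected) (hcol : G.Colorable 2) {a b : V}
    (hab : G.Adj a b) : semicube G b a = (semicube G a b)ᶜ := by
  ext w
  have := dist_ne_dist_of_adj hconn hcol hab w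
  change G.dist w b < G.dist w a ↔ ¬G.dist w a < G.dist w b
  omega

end Semicube

namespace RectangleCondition

variable {V : Type} {G : SimpleGraph V}

theorem mem_semicube_of_mem_semicube (hrect : RectangleCondition G) {a b x y : V}
    (hab : G.Adj a b) (hxy : G.Adj x y) (hx : x ∈ semicube G a b) (hy : y ∈ semicube G b a) :
    a ∈ semicube G x y := by
  obtain ⟨-, hxb⟩ := hrect a b x y a b hab hxy hab hx hy (mem_semicube_self hab)
    (mem_semicube_self hab.symm)
  have hx : G.dist x a < G.dist x b := hx
  change G.dist a x < G.dist a y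
  rw [dist_comm (u := a), dist_comm (u := a), ← hxb]
  exact hx

variable (hconn : G.Connected) (hcol : G.Colorable 2)
include hconn hcol

theorem semicube_subset (hrect : RectangleCondition G) {a b x y : V}
    (hab : G.Adj a b) (hxy : G.Adj x y) (hx : x ∈ semicube G a b) (hy : y ∈ semicube G b a) :
    semicube G a b ⊆ semicube G x y := by
  intro w hw
  induction hn : G.dist w a generalizing w with
  | zero =>
    rw [hconn.dist_eq_zero_iff] at hn
    exact hn ▸ hrect.mem_semicube_of_mem_semicube hab hxy hx hy
  | succ n ih =>
    obtain ⟨w', hww', hw'a⟩ := hconn.exists_adj_dist_eq hn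
    have hwb := dist_eq_dist_add_one_of_mem_semicube hab hw
    have hw'b := hww'.diff_dist_adj (u := b)
    rw [dist_comm (u := b), dist_comm (u := b)] at hw'b
    have hw' : w' ∈ semicube G a b := by
      change G.dist w' a < G.dist w' b
      omega
    by_contra hwxy
    -- now `w'w ∈ F_xy`, and the rectangle condition gives `d(w', a) = d(w, b) = d(w', a) + 2`
    rw [← Set.mem_compl_iff, ← semicube_swap_eq_compl hconn hcol hxy] at hwxy
    have := (hrect x y w' w a b hxy hww'.symm hab (ih hw' hw'a) hwxy
      (hrect.mem_semicube_of_mem_semicube hab hxy hx hy)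
      (hrect.mem_semicube_of_mem_semicube hab.symm hxy.symm hy hx)).1
    omega

theorem semicube_eq (hrect : RectangleCondition G) {a b x y : V}
    (hab : G.Adj a b) (hxy : G.Adj x y) (hx : x ∈ semicube G a b) (hy : y ∈ semicube G b a) :
    semicube G a b = semicube G x y :=
  (hrect.semicube_subset hconn hcol hab hxy hx hy).antisymm
    (hrect.semicube_subset hconn hcol hxy hab
      (hrect.mem_semicube_of_mem_semicube hab hxy hx hy)
      (hrect.mem_semicube_of_mem_semicube hab.symm hxy.symm hy hx))

end RectangleCondition

section SemicubeLabel

variable {V : Type} {G : SimpleGraph V}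

def semicubes (G : SimpleGraph V) : Set (Set V) :=
  {S | ∃ a b, G.Adj a b ∧ S = semicube G a b}

def semicubeLabel (G : SimpleGraph V) (v₀ w : V) : Set (Set V) :=
  {S ∈ semicubes G | w ∈ S ∧ v₀ ∉ S}

theorem semicubeLabel_self (v₀ : V) : semicubeLabel G v₀ v₀ = ∅ :=
  Set.eq_empty_of_forall_notMem fun _ hS => hS.2.2 hS.2.1

theorem mem_semicubeLabel_symmDiff {v₀ u v : V} {S : Set V} :
    S ∈ semicubeLabel G v₀ u ∆ semicubeLabel G v₀ v ↔
      S ∈ semicubes G ∧ v₀ ∉ S ∧ ¬(u ∈ S ↔ v ∈ S) := by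
  simp only [semicubeLabel, Set.mem_symmDiff, Set.mem_sep_iff]
  tauto

variable (hconn : G.Connected) (hcol : G.Colorable 2)
include hconn hcol

theorem RectangleCondition.semicubeLabel_symmDiff_of_adj (hrect : RectangleCondition G)
    {v₀ u u' : V} (huu' : G.Adj u u') (hv₀ : v₀ ∉ semicube G u u') :
    semicubeLabel G v₀ u ∆ semicubeLabel G v₀ u' = {semicube G u u'} := by
  have hu' : u' ∉ semicube G u u' := by
    rw [← Set.mem_compl_iff, ← semicube_swap_eq_compl hconn hcol huu']
    exact mem_semicube_self huu'.symm
  ext S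
  rw [mem_semicubeLabel_symmDiff, Set.mem_singleton_iff]
  constructor
  · rintro ⟨⟨a, b, hab, rfl⟩, hv₀S, hsep⟩
    have hcompl := semicube_swap_eq_compl hconn hcol hab
    by_cases hu : u ∈ semicube G a b
    · have hu'S : u' ∈ semicube G b a := by rw [hcompl]; tauto
      exact hrect.semicube_eq hconn hcol hab huu' hu hu'S
    · have huS : u ∈ semicube G b a := by rw [hcompl]; exact hu
      have hu'S : u' ∈ semicube G a b := by tauto
      rw [hrect.semicube_eq hconn hcol hab huu'.symm hu'S huS,
        semicube_swap_eq_compl hconn hcol huu'] at hv₀S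
      exact (hv₀S hv₀).elim
  · rintro rfl
    exact ⟨⟨u, u', huu', rfl⟩, hv₀, by simp [mem_semicube_self huu', hu']⟩

theorem RectangleCondition.exists_semicubeLabel_symmDiff_eq_singleton
    (hrect : RectangleCondition G) {v₀ u u' v : V} (huu' : G.Adj u u')
    (hv : v ∈ semicube G u' u) :
    ∃ S, semicubeLabel G v₀ u ∆ semicubeLabel G v₀ u' = {S} ∧
      S ∉ semicubeLabel G v₀ u' ∆ semicubeLabel G v₀ v := by
  have hcompl := semicube_swap_eq_compl hconn hcol huu'
  have hu' := mem_semicube_self huu'.symm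
  by_cases hv₀ : v₀ ∈ semicube G u u'
  · refine ⟨semicube G u' u, ?_, fun hS => ?_⟩
    · rw [symmDiff_comm]
      exact hrect.semicubeLabel_symmDiff_of_adj hconn hcol huu'.symm (by rw [hcompl]; tauto)
    · exact (mem_semicubeLabel_symmDiff.mp hS).2.2 (iff_of_true hu' hv)
  · refine ⟨semicube G u u', hrect.semicubeLabel_symmDiff_of_adj hconn hcol huu' hv₀,
      fun hS => ?_⟩
    rw [hcompl] at hu' hv
    exact (mem_semicubeLabel_symmDiff.mp hS).2.2 (iff_of_false hu' hv)

theorem RectangleCondition.encard_semicubeLabel_symmDiff (hrect : RectangleCondition G)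
    (v₀ u v : V) :
    (semicubeLabel G v₀ u ∆ semicubeLabel G v₀ v).encard = G.dist u v := by
  induction hn : G.dist u v generalizing u with
  | zero =>
    rw [hconn.dist_eq_zero_iff.mp hn, symmDiff_self]
    exact Set.encard_empty
  | succ n ih =>
    obtain ⟨u', huu', hu'v⟩ := hconn.exists_adj_dist_eq hn
    have hv : v ∈ semicube G u' u := by
      change G.dist v u' < G.dist v u
      rw [dist_comm, hu'v, dist_comm, hn]
      exact n.lt_succ_self
    obtain ⟨S, hS, hSnotMem⟩ :=
      hrect.exists_semicubeLabel_symmDiff_eq_singleton hconn hcol (v₀ := v₀) huu' hv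
    have hsplit : semicubeLabel G v₀ u ∆ semicubeLabel G v₀ v =
        insert S (semicubeLabel G v₀ u' ∆ semicubeLabel G v₀ v) := calc
      _ = (semicubeLabel G v₀ u ∆ semicubeLabel G v₀ u') ∆
          (semicubeLabel G v₀ u' ∆ semicubeLabel G v₀ v) := by
        rw [symmDiff_assoc, symmDiff_symmDiff_cancel_left]
      _ = _ := by rw [hS, symmDiff_comm, Set.symmDiff_singleton_of_notMem hSnotMem]
    rw [hsplit, Set.encard_insert_of_notMem hSnotMem, ih u' hu'v]
    push_cast
    rfl

theorem RectangleCondition.isPartialCube (hrect : RectangleCondition G) : IsPartialCube G := by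
  obtain ⟨v₀⟩ := hconn.nonempty
  have hdist (u v : V) := hrect.encard_semicubeLabel_symmDiff hconn hcol v₀ u v
  refine ⟨hconn, Set V, semicubeLabel G v₀, fun u => ?_, fun u v => ?_⟩
  · have := hdist u v₀
    rw [semicubeLabel_self, ← Set.bot_eq_empty, symmDiff_bot] at this
    exact Set.finite_of_encard_eq_coe this
  · rw [Set.ncard_def, hdist, ENat.toNat_natCast]

end SemicubeLabel

/-- A connected graph `G` is a partial cube if and only if `G` is bipartite and
for every edge `ab` and every pair of edges `xy, uv ∈ F_ab` (with
`x, u ∈ W_ab` and `y, v ∈ W_ba`) one has `d(x,u) = d(y,v)` and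
`d(x,v) = d(y,u)`. -/
theorem partialCube_iff_bipartite_and_rectangles {V : Type}
    (G : SimpleGraph V) (hconn : G.Connected) :
    IsPartialCube G ↔
      (G.Colorable 2 ∧
        ∀ a b x y u v : V, G.Adj a b → G.Adj x y → G.Adj u v →
          x ∈ semicube G a b → y ∈ semicube G b a →
          u ∈ semicube G a b → v ∈ semicube G b a →
          G.dist x u = G.dist y v ∧ G.dist x v = G.dist y u) :=
  ⟨fun h => ⟨h.colorable_two, h.rectangleCondition⟩,
    fun ⟨hcol, hrect⟩ => RectangleCondition.isPartialCube hconn hcol hrect⟩
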